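/- Let K : α → Matrix (Fin n) (Fin n) ℂ be a finite family of Kraus operators such that for every density matrix ρ (positive semidefinite with trace 1), ∑ a, K a * ρ * (K a)ᴴ = ρ. Then each K a is a scalar multiple of the identity matrix. -/

import Mathlib

open ComplexOrder Matrix

namespace NoInfo

variable {n : ℕ}

lemma outer_psd (w : Fin n → ℂ) : (Matrix.vecMulVec w (star w)).PosSemidef := by
  rw [posSemidef_iff_dotProduct_mulVec]
  constructor
  · ext i j
    simp [Matrix.vecMulVec, Matrix.conjTranspose_apply, mul_comm]
  · intro x
    have h1 : vecMulVec w (star w) *ᵥ x = fun i => w i * (star w ⬝ᵥ x) := by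
      funext i
      simp [Matrix.mulVec, Matrix.vecMulVec, dotProduct, Finset.mul_sum, mul_assoc]
    have h2 : star x ⬝ᵥ (vecMulVec w (star w) *ᵥ x)
        = star (star w ⬝ᵥ x) * (star w ⬝ᵥ x) := by
      rw [h1]
      simp [dotProduct, Finset.sum_mul, star_sum, Finset.mul_sum]
      rw [Finset.sum_comm]
      exact Finset.sum_congr rfl fun i _ => Finset.sum_congr rfl fun j _ => by ring
    rw [h2]
    exact star_mul_self_nonneg _

lemma conj_outer (M : Matrix (Fin n) (Fin n) ℂ) (v : Fin n → ℂ) :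
    M * vecMulVec v (star v) * Mᴴ = vecMulVec (M *ᵥ v) (star (M *ᵥ v)) := by
  ext i j
  simp only [Matrix.mul_apply, vecMulVec_apply, conjTranspose_apply, mulVec,
    dotProduct, Pi.star_apply, Finset.sum_mul, Finset.mul_sum, star_sum, star_mul']
  exact Finset.sum_congr rfl fun k _ => Finset.sum_congr rfl fun l _ => by ring

lemma quad_sum {β : Type*} [Fintype β] (A : β → Matrix (Fin n) (Fin n) ℂ) (u : Fin n → ℂ) :
    star u ⬝ᵥ ((∑ b, A b) *ᵥ u) = ∑ b, star u ⬝ᵥ (A b *ᵥ u) := by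
  simp only [Matrix.mulVec, dotProduct, Finset.sum_apply, Finset.mul_sum,
    Finset.sum_mul, Matrix.sum_apply]
  rw [Finset.sum_comm (γ := β)]
  refine Finset.sum_congr rfl fun x _ => ?_
  exact Finset.sum_comm

lemma outer_trace (v : Fin n → ℂ) :
    (Matrix.vecMulVec v (star v)).trace = star v ⬝ᵥ v := by
  simp [Matrix.trace, Matrix.diag, vecMulVec_apply, dotProduct, mul_comm]

lemma quadform_outer (w u : Fin n → ℂ) :
    star u ⬝ᵥ (vecMulVec w (star w) *ᵥ u) = star (star w ⬝ᵥ u) * (star w ⬝ᵥ u) := by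
  have h1 : vecMulVec w (star w) *ᵥ u = fun i => w i * (star w ⬝ᵥ u) := by
    funext i
    simp [Matrix.mulVec, Matrix.vecMulVec, dotProduct, Finset.mul_sum, mul_assoc]
  rw [h1]
  simp [dotProduct, Finset.sum_mul, star_sum, Finset.mul_sum]
  rw [Finset.sum_comm]
  exact Finset.sum_congr rfl fun i _ => Finset.sum_congr rfl fun j _ => by ring

end NoInfo

open NoInfo

theorem no_info_gain_without_disturbance
    {n : ℕ} {α : Type*} [Fintype α]
    (K : α → Matrix (Fin n) (Fin n) ℂ)
    (h : ∀ ρ : Matrix (Fin n) (Fin n) ℂ, ρ.PosSemidef → ρ.trace = 1 →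
      ∑ a, K a * ρ * (K a).conjTranspose = ρ) :
    ∀ a, ∃ c : ℂ, K a = c • (1 : Matrix (Fin n) (Fin n) ℂ) := by
  intro a
  -- Step 1: for any unit vector v and any u ⊥ v, (K a *ᵥ v) ⊥ u
  have key : ∀ v : Fin n → ℂ, star v ⬝ᵥ v = 1 → ∀ u : Fin n → ℂ,
      star v ⬝ᵥ u = 0 → star (K a *ᵥ v) ⬝ᵥ u = 0 := by
    intro v hv u hu
    have hsum := h (vecMulVec v (star v)) (outer_psd v) (by rw [outer_trace, hv])
    have hsum' : ∑ b, vecMulVec (K b *ᵥ v) (star (K b *ᵥ v)) = vecMulVec v (star v) := by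
      rw [← hsum]; exact Finset.sum_congr rfl fun b _ => (conj_outer (K b) v).symm
    -- apply the quadratic form at u
    have hq : ∑ b, star (star (K b *ᵥ v) ⬝ᵥ u) * (star (K b *ᵥ v) ⬝ᵥ u) = 0 := by
      have := congrArg (fun M => star u ⬝ᵥ (M *ᵥ u)) hsum'
      rw [quadform_outer v u, hu, star_zero, zero_mul] at this
      rw [← this, quad_sum]
      exact Finset.sum_congr rfl fun b _ => (quadform_outer _ u).symm
    -- each term is a nonneg real; sum zero forces each zero
    have hre : ∑ b, Complex.normSq (star (K b *ᵥ v) ⬝ᵥ u) = 0 := by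
      have := congrArg Complex.re hq
      simpa [Complex.mul_re, Complex.normSq, Complex.conj_re, Complex.conj_im] using this
    have hzero := (Finset.sum_eq_zero_iff_of_nonneg
      (fun b _ => Complex.normSq_nonneg _)).mp hre a (Finset.mem_univ a)
    exact Complex.normSq_eq_zero.mp hzero
  -- Step 2: for unit v, K a *ᵥ v is a multiple of v
  have eig : ∀ v : Fin n → ℂ, star v ⬝ᵥ v = 1 →
      K a *ᵥ v = (star v ⬝ᵥ (K a *ᵥ v)) • v := by
    intro v hv
    set w := K a *ᵥ v with hw
    set c := star v ⬝ᵥ w with hc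
    set u : Fin n → ℂ := w - c • v with hu
    have hvu : star v ⬝ᵥ u = 0 := by
      simp [hu, dotProduct_sub, dotProduct_smul, hv, smul_eq_mul, ← hc]
    have hwu : star w ⬝ᵥ u = 0 := key v hv u hvu
    have huu : star u ⬝ᵥ u = 0 := by
      have h2 : star u = star w - star c • star v := by
        funext i; simp [hu, smul_eq_mul]
      rw [h2, sub_dotProduct, smul_dotProduct, hwu, hvu, smul_zero, sub_zero]
    have : ∑ i, Complex.normSq (u i) = 0 := by
      have := congrArg Complex.re huu
      simpa [dotProduct, Complex.mul_re, Complex.normSq, Complex.conj_re,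
        Complex.conj_im] using this
    have hu0 : u = 0 := by
      funext i
      exact Complex.normSq_eq_zero.mp ((Finset.sum_eq_zero_iff_of_nonneg
        (fun i _ => Complex.normSq_nonneg _)).mp this i (Finset.mem_univ i))
    have := sub_eq_zero.mp hu0
    simpa [hu] using sub_eq_zero.mp hu0
  -- Step 3: conclude K a is scalar
  rcases Nat.eq_zero_or_pos n with h0 | hpos
  · exact ⟨0, by ext i j; exact absurd i.isLt (by omega)⟩
  set e : Fin n → Fin n → ℂ := fun i => Pi.single i 1 with he
  have hunit : ∀ i, star (e i) ⬝ᵥ e i = 1 := by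
    intro i; simp [he, dotProduct, Pi.single_apply]
  have hKe : ∀ i, K a *ᵥ e i = (K a i i) • e i := by
    intro i
    have h1 := eig (e i) (hunit i)
    have h2 : star (e i) ⬝ᵥ (K a *ᵥ e i) = K a i i := by
      simp [he, dotProduct, Matrix.mulVec, Pi.single_apply]
    rwa [h2] at h1
  have hent : ∀ i j, K a j i = if j = i then K a i i else 0 := by
    intro i j
    have := congrFun (hKe i) j
    simpa [he, Pi.single_apply] using this
  set i0 : Fin n := ⟨0, hpos⟩ with hi0
  have hdiag : ∀ i, K a i i = K a i0 i0 := by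
    intro i
    by_cases hii : i = i0
    · rw [hii]
    · set s : ℂ := (((Real.sqrt 2)⁻¹ : ℝ) : ℂ) with hs
      have hs2 : star s * s * 2 = 1 := by
        rw [hs, Complex.star_def, Complex.conj_ofReal]
        rw [← Complex.ofReal_mul]
        norm_cast
        rw [← mul_inv, Real.mul_self_sqrt (by norm_num)]
        norm_num
      have hse : star (s • (e i0 + e i)) ⬝ᵥ (s • (e i0 + e i)) = 1 := by
        have hdot : star (e i0 + e i) ⬝ᵥ (e i0 + e i) = 2 := by
          have hne : i0 ≠ i := fun hh => hii hh.symm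
          simp [he, dotProduct, Pi.single_apply, add_mul, mul_add,
            Finset.sum_add_distrib, hne, hii]
          norm_num
        rw [star_smul, smul_dotProduct, dotProduct_smul, hdot]
        rw [smul_eq_mul, smul_eq_mul, ← mul_assoc, hs2]
      have h1 := eig _ hse
      set c := star (s • (e i0 + e i)) ⬝ᵥ (K a *ᵥ (s • (e i0 + e i))) with hc
      have h2 : K a *ᵥ (e i0 + e i) = c • (e i0 + e i) := by
        have hs0 : s ≠ 0 := by
          rw [hs]
          simp only [ne_eq, Complex.ofReal_eq_zero, inv_eq_zero]
          positivity
        have h3 : s • (K a *ᵥ (e i0 + e i)) = s • (c • (e i0 + e i)) := by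
          rw [← Matrix.mulVec_smul]
          rw [h1, smul_comm]
        exact smul_right_injective _ hs0 h3
      have hv0 := congrFun h2 i0
      have hvi := congrFun h2 i
      have hne : i0 ≠ i := fun hh => hii hh.symm
      have e0 : (K a *ᵥ (e i0 + e i)) i0 = K a i0 i0 ∧ (K a *ᵥ (e i0 + e i)) i = K a i i := by
        constructor
        · simp only [Matrix.mulVec_add, he, Matrix.mulVec_single_one, Matrix.col_apply, Pi.add_apply, mul_one]
          rw [hent i i0]
          simp [hne]
        · simp only [Matrix.mulVec_add, he, Matrix.mulVec_single_one, Matrix.col_apply, Pi.add_apply, mul_one]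
          rw [hent i0 i]
          simp [hii]
      rw [e0.1] at hv0
      rw [e0.2] at hvi
      simp [he, Pi.single_apply, hne, hii] at hv0 hvi
      rw [hv0, hvi]
  refine ⟨K a i0 i0, ?_⟩
  ext i j
  rw [hent j i, hdiag j]
  simp [Matrix.one_apply]
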